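/- Let G be a symmetric n×n integer matrix with det G ≠ 0, and suppose M ∈ Mₙ(ℤ) has odd determinant and MᵀGM is the block diagonal matrix with diagonal blocks G₁ and 2·G₂, where G₁ is a symmetric n₂×n₂ integer matrix with odd determinant and G₂ is a symmetric (n−n₂)×(n−n₂) integer matrix. Then for every r ∈ sh(G) with 2r ∈ ℤⁿ one has exp(πi·(2r)ᵀG(2r)) = (−1)^{n₂}, i.e. e(β(2r)) = (−1)^{n₂}. -/
import Mathlib


open Matrix

/-- The shadow of a nondegenerate integral lattice with Gram matrix `G`:
`sh(G) = {r ∈ ℚⁿ : rᵀGx − xᵀGx/2 ∈ ℤ for all x ∈ ℤⁿ}`. -/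
def latticeShadow {n : ℕ} (G : Matrix (Fin n) (Fin n) ℤ) : Set (Fin n → ℚ) :=
  {r | ∀ x : Fin n → ℤ, ∃ m : ℤ,
    r ⬝ᵥ (G.map (Int.cast : ℤ → ℚ)).mulVec (fun i => (x i : ℚ))
      - ((fun i => (x i : ℚ)) ⬝ᵥ (G.map (Int.cast : ℤ → ℚ)).mulVec (fun i => (x i : ℚ))) / 2
      = (m : ℚ)}

/-- A rational vector is integral if all its coordinates are integers. -/
def IsIntVec {n : ℕ} (v : Fin n → ℚ) : Prop := ∀ i, ∃ m : ℤ, v i = (m : ℚ)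

lemma zmod2_sq (a : ZMod 2) : a * a = a := by revert a; decide

lemma sum_symm_char2 {m : ℕ} (f : Fin m → Fin m → ZMod 2)
    (hf : ∀ i j, f i j = f j i) :
    (∑ i, ∑ j, f i j) = ∑ i, f i i := by
  have key : ∀ i j : Fin m, f i j =
      (if i < j then f i j else 0) + (if i = j then f i j else 0)
        + (if j < i then f i j else 0) := by
    intro i j
    rcases lt_trichotomy i j with h | h | h
    · rw [if_pos h, if_neg h.ne, if_neg (by omega)]; ring
    · rw [if_neg (by omega), if_pos h, if_neg (by omega)]; ring
    · rw [if_neg (by omega), if_neg (by omega), if_pos h]; ring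
  calc (∑ i, ∑ j, f i j)
      = (∑ i, ∑ j, (if i < j then f i j else 0)) + (∑ i, ∑ j, (if i = j then f i j else 0))
        + (∑ i, ∑ j, (if j < i then f i j else 0)) := by
        simp_rw [← Finset.sum_add_distrib]; exact Finset.sum_congr rfl fun i _ =>
          Finset.sum_congr rfl fun j _ => key i j
    _ = ∑ i, f i i := by
        have h1 : (∑ i, ∑ j, (if j < i then f i j else 0))
            = ∑ i, ∑ j, (if i < j then f i j else 0) := by
          rw [Finset.sum_comm]
          exact Finset.sum_congr rfl fun i _ => Finset.sum_congr rfl fun j _ => by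
            rw [hf]
        have h2 : (∑ i, ∑ j, (if i = j then f i j else 0)) = ∑ i, f i i := by
          simp [Finset.sum_ite_eq]
        rw [h1, h2]
        have : ∀ a b : ZMod 2, a + b + a = b := by decide
        exact this _ _

lemma quad_eq_diag {m : ℕ} (B : Matrix (Fin m) (Fin m) (ZMod 2)) (hB : B.IsSymm)
    (t : Fin m → ZMod 2) : t ⬝ᵥ B.mulVec t = (fun i => B i i) ⬝ᵥ t := by
  have : t ⬝ᵥ B.mulVec t = ∑ i, ∑ j, t i * B i j * t j := by
    simp [dotProduct, Matrix.mulVec, Finset.mul_sum, mul_assoc]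
  rw [this, sum_symm_char2 (fun i j => t i * B i j * t j)
    (fun i j => by show t i * B i j * t j = t j * B j i * t i; rw [hB.apply i j]; ring)]
  simp only [dotProduct]
  exact Finset.sum_congr rfl fun i _ => by
    rw [show t i * B i i * t i = B i i * (t i * t i) by ring, zmod2_sq]

lemma diag_dot_of_symm {m : ℕ} (B : Matrix (Fin m) (Fin m) (ZMod 2)) (hB : B.IsSymm)
    (hdet : B.det = 1) (s : Fin m → ZMod 2) (hs : B.mulVec s = fun i => B i i) :
    (fun i => B i i) ⬝ᵥ s = (m : ZMod 2) := by
  have hadj : (B.adjugate).IsSymm := by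
    unfold Matrix.IsSymm
    rw [Matrix.adjugate_transpose, hB.eq]
  have hsadj : s = (B.adjugate).mulVec (fun i => B i i) := by
    rw [← hs, Matrix.mulVec_mulVec, Matrix.adjugate_mul, hdet, one_smul, Matrix.one_mulVec]
  rw [hsadj]
  have h1 : (fun i => B i i) ⬝ᵥ (B.adjugate).mulVec (fun i => B i i)
      = ∑ i, ∑ j, B i i * B.adjugate i j * B j j := by
    simp [dotProduct, Matrix.mulVec, Finset.mul_sum, mul_assoc]
  rw [h1, sum_symm_char2 (fun i j => B i i * B.adjugate i j * B j j)
    (fun i j => by show B i i * B.adjugate i j * B j j = B j j * B.adjugate j i * B i i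
                   rw [hadj.apply i j]; ring)]
  have h2 : ∑ i, ∑ j, B.adjugate i j * B j i = ∑ i, B.adjugate i i * B i i := by
    exact sum_symm_char2 (fun i j => B.adjugate i j * B j i)
      (fun i j => by show B.adjugate i j * B j i = B.adjugate j i * B i j
                     rw [hadj.apply i j, hB.apply i j])
  have h3 : ∑ i, ∑ j, B.adjugate i j * B j i = (m : ZMod 2) := by
    have : ∀ i, ∑ j, B.adjugate i j * B j i = (B.adjugate * B) i i := by
      intro i; simp [Matrix.mul_apply]
    simp_rw [this, Matrix.adjugate_mul, hdet, one_smul]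
    simp [Matrix.one_apply]
  rw [← h3, h2]
  exact Finset.sum_congr rfl fun i _ => by
    rw [show B i i * B.adjugate i i * B i i = B.adjugate i i * (B i i * B i i) by ring,
      zmod2_sq]

lemma cast_dot_mulVec {n : ℕ} {R S : Type*} [CommRing R] [CommRing S] (f : R →+* S)
    (v x : Fin n → R) (G : Matrix (Fin n) (Fin n) R) :
    f (v ⬝ᵥ G.mulVec x) = (f ∘ v) ⬝ᵥ (G.map f).mulVec (f ∘ x) := by
  rw [RingHom.map_dotProduct]
  congr 1
  funext i
  exact RingHom.map_mulVec f G x i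

-- mod 2 core assembly
lemma shadow_parity {n n₂ : ℕ} (G M : Matrix (Fin n) (Fin n) ℤ)
    (G₁ : Matrix (Fin n₂) (Fin n₂) ℤ) (G₂ : Matrix (Fin (n - n₂)) (Fin (n - n₂)) ℤ)
    (e : Fin n ≃ (Fin n₂ ⊕ Fin (n - n₂)))
    (hM : Odd M.det) (hG₁ : G₁.IsSymm) (hG₁det : Odd G₁.det)
    (hblock : Mᵀ * G * M = (Matrix.fromBlocks G₁ 0 0 ((2 : ℤ) • G₂)).submatrix e e)
    (v : Fin n → ℤ)
    (hshadow : ∀ x : Fin n → ℤ, ∃ k : ℤ, v ⬝ᵥ G.mulVec x - x ⬝ᵥ G.mulVec x = 2 * k) :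
    ((v ⬝ᵥ G.mulVec v : ℤ) : ZMod 2) = (n₂ : ZMod 2) := by
  set φ : ℤ →+* ZMod 2 := Int.castRingHom (ZMod 2) with hφ
  set B := G.map φ with hB
  set Mb := M.map φ with hMb
  set G1b := G₁.map φ with hG1b
  set vb : Fin n → ZMod 2 := φ ∘ v with hvb
  -- odd ints cast to 1
  have h20 : ((2:ℤ) : ZMod 2) = 0 := by decide
  have hodd : ∀ d : ℤ, Odd d → φ d = 1 := by
    rintro d hd
    have h2 : (2:ℤ) ∣ d - 1 := by obtain ⟨k, rfl⟩ := hd; exact ⟨k, by ring⟩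
    have h0 : ((d - 1 : ℤ) : ZMod 2) = 0 := (ZMod.intCast_zmod_eq_zero_iff_dvd _ 2).mpr h2
    have h1 : φ d - 1 = 0 := by
      rw [← map_one φ, ← map_sub]; exact h0
    exact sub_eq_zero.mp h1
  have hdetMb : Mb.det = 1 := by
    rw [hMb, ← RingHom.mapMatrix_apply, ← φ.map_det]; exact hodd _ hM
  have hdetG1b : G1b.det = 1 := by
    rw [hG1b, ← RingHom.mapMatrix_apply, ← φ.map_det]; exact hodd _ hG₁det
  have hG1bsymm : G1b.IsSymm := by
    unfold Matrix.IsSymm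
    rw [hG1b, ← Matrix.transpose_map, hG₁.eq]
  -- block identity mod 2
  have h2G : ((2:ℤ) • G₂).map ⇑φ = 0 := by
    ext i j
    have hs : ((2:ℤ) • G₂) i j = 2 * G₂ i j := by simp [Matrix.smul_apply]
    rw [Matrix.map_apply, hs, _root_.map_mul, show φ (2:ℤ) = 0 from h20]
    simp
  have hA : Mbᵀ * B * Mb
      = (Matrix.fromBlocks G1b 0 0 (0 : Matrix (Fin (n-n₂)) (Fin (n-n₂)) (ZMod 2))).submatrix e e := by
    have h := congrArg (fun X => X.map ⇑φ) hblock
    simp only [Matrix.map_mul, Matrix.transpose_map, ← Matrix.submatrix_map,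
      Matrix.fromBlocks_map, h2G, Matrix.map_zero _ (map_zero φ)] at h
    rw [hMb, hB, hG1b]
    exact h
  -- shadow condition mod 2
  have hchar : ∀ x : Fin n → ZMod 2, vb ⬝ᵥ B.mulVec x = x ⬝ᵥ B.mulVec x := by
    intro x
    set x' : Fin n → ℤ := fun i => ((x i).val : ℤ) with hx'
    have hxx : ⇑φ ∘ x' = x := by
      funext i
      simp [hφ, hx', ZMod.natCast_val]
    obtain ⟨k, hk⟩ := hshadow x'
    have := congrArg φ hk
    rw [map_sub, _root_.map_mul, show φ (2:ℤ) = 0 from h20, zero_mul,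
      cast_dot_mulVec φ v x' G, cast_dot_mulVec φ x' x' G, sub_eq_zero] at this
    rw [← hB, ← hvb, hxx] at this
    exact this
  -- w with Mb w = vb
  set w : Fin n → ZMod 2 := (Mb.adjugate).mulVec vb with hw
  have hMw : Mb.mulVec w = vb := by
    rw [hw, Matrix.mulVec_mulVec, Matrix.mul_adjugate, hdetMb, one_smul, Matrix.one_mulVec]
  -- reduction of quadratic/bilinear forms through the block matrix
  have key : ∀ a b : Fin n → ZMod 2,
      a ⬝ᵥ ((Matrix.fromBlocks G1b 0 0
          (0 : Matrix (Fin (n-n₂)) (Fin (n-n₂)) (ZMod 2))).submatrix e e).mulVec b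
        = (a ∘ e.symm ∘ Sum.inl) ⬝ᵥ G1b.mulVec (b ∘ e.symm ∘ Sum.inl) := by
    intro a b
    have hmv : ((Matrix.fromBlocks G1b 0 0
        (0 : Matrix (Fin (n-n₂)) (Fin (n-n₂)) (ZMod 2))).submatrix e e).mulVec b
        = (Sum.elim (G1b.mulVec (b ∘ ⇑e.symm ∘ Sum.inl)) 0) ∘ ⇑e := by
      rw [Matrix.submatrix_mulVec_equiv]
      congr 1
      have hb : (b ∘ ⇑e.symm) = Sum.elim (b ∘ ⇑e.symm ∘ Sum.inl) (b ∘ ⇑e.symm ∘ Sum.inr) := by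
        funext z; cases z <;> rfl
      rw [hb, Matrix.fromBlocks_mulVec]
      funext z; cases z <;> simp
    rw [hmv]
    show ∑ i, a i * (Sum.elim (G1b.mulVec (b ∘ ⇑e.symm ∘ Sum.inl)) 0) (e i) = _
    rw [Fintype.sum_equiv e _
      (fun z => (a ∘ ⇑e.symm) z * (Sum.elim (G1b.mulVec (b ∘ ⇑e.symm ∘ Sum.inl)) 0) z)
      (fun i => by simp)]
    rw [Fintype.sum_sum_type]
    simp [dotProduct]
  have conj : ∀ a b : Fin n → ZMod 2,
      (Mb.mulVec a) ⬝ᵥ B.mulVec (Mb.mulVec b)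
        = (a ∘ ⇑e.symm ∘ Sum.inl) ⬝ᵥ G1b.mulVec (b ∘ ⇑e.symm ∘ Sum.inl) := by
    intro a b
    rw [Matrix.mulVec_mulVec, Matrix.dotProduct_mulVec, ← Matrix.vecMul_transpose,
      Matrix.vecMul_vecMul, ← mul_assoc, ← Matrix.dotProduct_mulVec, hA, key]
  set s : Fin n₂ → ZMod 2 := w ∘ ⇑e.symm ∘ Sum.inl with hs
  have hbil : ∀ t : Fin n₂ → ZMod 2, s ⬝ᵥ G1b.mulVec t = t ⬝ᵥ G1b.mulVec t := by
    intro t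
    set y : Fin n → ZMod 2 := Sum.elim t 0 ∘ ⇑e with hy
    have hysum : y ∘ ⇑e.symm ∘ Sum.inl = t := by
      funext i; simp [hy]
    have h1 := hchar (Mb.mulVec y)
    rw [← hMw] at h1
    rw [conj w y, conj y y, hysum] at h1
    exact h1
  have hvG1b : s ᵥ* G1b = G1b.mulVec s := by
    calc s ᵥ* G1b = s ᵥ* G1bᵀ := by rw [hG1bsymm.eq]
      _ = G1b.mulVec s := Matrix.vecMul_transpose G1b s
  have hGs : G1b.mulVec s = fun i => G1b i i := by
    have h' : ∀ t, (G1b.mulVec s) ⬝ᵥ t = (fun i => G1b i i) ⬝ᵥ t := by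
      intro t
      rw [← quad_eq_diag G1b hG1bsymm t, ← hbil t, Matrix.dotProduct_mulVec, hvG1b]
    funext i
    have := h' (Pi.single i 1)
    simpa [dotProduct_single] using this
  have hfinal : ((v ⬝ᵥ G.mulVec v : ℤ) : ZMod 2) = (n₂ : ZMod 2) := by
    have hcast : ((v ⬝ᵥ G.mulVec v : ℤ) : ZMod 2) = vb ⬝ᵥ B.mulVec vb :=
      cast_dot_mulVec φ v v G
    rw [hcast, ← hMw, conj w w, ← hs]
    rw [Matrix.dotProduct_mulVec, hvG1b, hGs]
    exact diag_dot_of_symm G1b hG1bsymm hdetG1b s hGs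
  exact hfinal

/-- If `MᵀGM = G₁ ⊕ 2·G₂` with `M` and `G₁` of odd determinant and
`G₁` of size `n₂`, then for every shadow vector `r` with `2r ∈ ℤⁿ` one has
`e(β(2r)) = exp(πi·(2r)ᵀG(2r)) = (−1)^{n₂}`. -/
theorem exp_two_torsion_shadow_vector
    {n : ℕ} (G : Matrix (Fin n) (Fin n) ℤ) (hG : G.IsSymm) (hdet : G.det ≠ 0)
    (n₂ : ℕ) (hn₂ : n₂ ≤ n) (M : Matrix (Fin n) (Fin n) ℤ)
    (G₁ : Matrix (Fin n₂) (Fin n₂) ℤ) (G₂ : Matrix (Fin (n - n₂)) (Fin (n - n₂)) ℤ)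
    (e : Fin n ≃ (Fin n₂ ⊕ Fin (n - n₂)))
    (hM : Odd M.det) (hG₁ : G₁.IsSymm) (hG₁det : Odd G₁.det) (hG₂ : G₂.IsSymm)
    (hblock : Mᵀ * G * M = (Matrix.fromBlocks G₁ 0 0 ((2 : ℤ) • G₂)).submatrix e e) :
    ∀ r ∈ latticeShadow G, IsIntVec ((2 : ℚ) • r) →
      Complex.exp ((Real.pi : ℂ) * Complex.I *
          (((((2 : ℚ) • r) ⬝ᵥ (G.map (Int.cast : ℤ → ℚ)).mulVec ((2 : ℚ) • r)) : ℚ) : ℂ)) =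
        (-1 : ℂ) ^ n₂ := by
  intro r hr hint
  choose v hv using hint
  set N : ℤ := v ⬝ᵥ G.mulVec v with hN
  have hvec : ((2:ℚ) • r) = fun i => (v i : ℚ) := funext hv
  have hQ : (((2:ℚ) • r) ⬝ᵥ (G.map (Int.cast : ℤ → ℚ)).mulVec ((2:ℚ) • r)) = (N : ℚ) := by
    rw [hvec]
    exact (cast_dot_mulVec (Int.castRingHom ℚ) v v G).symm
  have hshadow : ∀ x : Fin n → ℤ, ∃ k : ℤ, v ⬝ᵥ G.mulVec x - x ⬝ᵥ G.mulVec x = 2 * k := by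
    intro x
    obtain ⟨m, hm⟩ := hr x
    refine ⟨m, ?_⟩
    have hx : (fun i => ((x i : ℚ))) = (Int.cast : ℤ → ℚ) ∘ x := rfl
    have h1 : ((v ⬝ᵥ G.mulVec x : ℤ) : ℚ) =
        (fun i => (v i : ℚ)) ⬝ᵥ (G.map (Int.cast : ℤ → ℚ)).mulVec (fun i => (x i : ℚ)) := by
      rw [hx]; exact cast_dot_mulVec (Int.castRingHom ℚ) v x G
    have h2 : ((x ⬝ᵥ G.mulVec x : ℤ) : ℚ) =
        (fun i => (x i : ℚ)) ⬝ᵥ (G.map (Int.cast : ℤ → ℚ)).mulVec (fun i => (x i : ℚ)) := by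
      rw [hx]; exact cast_dot_mulVec (Int.castRingHom ℚ) x x G
    have key : ((v ⬝ᵥ G.mulVec x : ℤ) : ℚ) - ((x ⬝ᵥ G.mulVec x : ℤ) : ℚ) = 2 * m := by
      rw [h1, h2, ← hvec, smul_dotProduct, smul_eq_mul]
      linarith [hm]
    exact_mod_cast key
  have hpar : ((N : ℤ) : ZMod 2) = (n₂ : ZMod 2) :=
    shadow_parity G M G₁ G₂ e hM hG₁ hG₁det hblock v hshadow
  -- extract divisibility
  have hz : ((N - (n₂:ℤ) : ℤ) : ZMod 2) = 0 := by
    push_cast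
    rw [hpar]
    ring
  have hdvd : (2:ℤ) ∣ N - (n₂ : ℤ) := by
    exact_mod_cast (ZMod.intCast_zmod_eq_zero_iff_dvd _ 2).mp hz
  obtain ⟨k, hk⟩ := hdvd
  have hNeq : N = (n₂ : ℤ) + 2 * k := by omega
  rw [hQ]
  have harg : (Real.pi : ℂ) * Complex.I * (((N : ℚ) : ℂ))
      = (N : ℤ) * ((Real.pi : ℂ) * Complex.I) := by
    push_cast
    ring
  rw [harg, Complex.exp_int_mul, Complex.exp_pi_mul_I, hNeq]
  rw [zpow_add₀ (by norm_num : (-1:ℂ) ≠ 0), zpow_natCast, _root_.zpow_mul]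
  norm_num
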